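/- If every vessel's berth arrival and departure times satisfy the berth capacity condition: for each vessel v, the number of other vessels u with t^Berth_u ≤ t^Berth_v < t^Depart_u is at most B−1, and all berth arrival times are distinct, then at every time instant τ the number of vessels with t^Berth_v ≤ τ < t^Depart_v is at most B. -/
import Mathlib


/-- If for each vessel `v` the number of other vessels `u` with
`tB u ≤ tB v < tD u` is at most `B − 1`, berth intervals are nonempty
(`tB v < tD v`), and all berth arrival times are distinct, then at every time instant
`τ` the number of vessels with `tB v ≤ τ < tD v` is at most `B`. -/
theorem decomposed_berth_cumulative_correct
    {ι : Type*} [DecidableEq ι] (V : Finset ι)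
    (tB tD : ι → ℝ) (B : ℕ) (hB : 1 ≤ B)
    (hiv : ∀ v ∈ V, tB v < tD v)
    (hinj : ∀ u ∈ V, ∀ v ∈ V, tB u = tB v → u = v)
    (hcap : ∀ v ∈ V,
      (V.filter (fun u => u ≠ v ∧ tB u ≤ tB v ∧ tB v < tD u)).card ≤ B - 1) :
    ∀ τ : ℝ, (V.filter (fun v => tB v ≤ τ ∧ τ < tD v)).card ≤ B := by
  intro τ
  set S := V.filter (fun v => tB v ≤ τ ∧ τ < tD v) with hS
  rcases S.eq_empty_or_nonempty with h | h
  · simp [h]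
  · obtain ⟨v, hvS, hvmax⟩ := S.exists_max_image tB h
    have hvV : v ∈ V := (Finset.mem_filter.mp hvS).1
    have hvτ := (Finset.mem_filter.mp hvS).2
    have hsub : S.erase v ⊆ V.filter (fun u => u ≠ v ∧ tB u ≤ tB v ∧ tB v < tD u) := by
      intro u hu
      have huv : u ≠ v := (Finset.mem_erase.mp hu).1
      have huS : u ∈ S := (Finset.mem_erase.mp hu).2
      have huV : u ∈ V := (Finset.mem_filter.mp huS).1
      have huτ := (Finset.mem_filter.mp huS).2
      exact Finset.mem_filter.mpr ⟨huV, huv, hvmax u huS, lt_of_le_of_lt hvτ.1 huτ.2⟩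
    have h1 : (S.erase v).card ≤ B - 1 := le_trans (Finset.card_le_card hsub) (hcap v hvV)
    have h2 : S.card = (S.erase v).card + 1 := by
      rw [Finset.card_erase_of_mem hvS]
      have := Finset.card_pos.mpr h
      omega
    omega
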